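/- (Composition of Markov kernels is jointly SOT-continuous) Let X, Y, Z be nonempty standard Borel spaces, μ a probability measure on X, and let gⁿ, g : X ⇸ Y and hⁿ, h : Y ⇸ Z be Markov kernels with μ.bind gⁿ = μ.bind g = ν and ν.bind hⁿ = ν.bind h = ρ for all n. If gⁿ converges to g in the strong operator topology (relative to μ, ν) and hⁿ converges to h in the strong operator topology (relative to ν, ρ), then the composites hⁿ ∘ gⁿ : X ⇸ Z converge to h ∘ g in the strong operator topology relative to μ and ρ, i.e. for every ρ-integrable measurable φ : Z → ℝ, ∫_X |∫_Z φ d((hⁿ ∘ gⁿ) x) − ∫_Z φ d((h ∘ g) x)| dμ(x) → 0 as n → ∞. -/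

import Mathlib

/-!
Write `ψ = ∫ φ dh` and `ψₙ = ∫ φ dhₙ`, so that `∫ φ d((hₙ ∘ gₙ) x) = ∫ ψₙ d(gₙ x)` for `μ`-a.e. `x`.
By the triangle inequality,
`|∫ ψₙ d(gₙ x) - ∫ ψ d(g x)| ≤ ∫ |ψₙ - ψ| d(gₙ x) + |∫ ψ d(gₙ x) - ∫ ψ d(g x)|`.
Integrating against `μ` and using `μ.bind gₙ = ν`, the first term becomes `∫ |ψₙ - ψ| dν`,
which tends to `0` because `hₙ → h`; the second tends to `0` because `gₙ → g`, tested against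
the `ν`-integrable function `ψ`.
-/

open MeasureTheory Filter Topology

/-- Convergence of a sequence of Markov kernels to a kernel in the strong
operator topology (relative to measures `μ` on the domain and `ν` on the
codomain). -/
def TendstoSOT {X Y : Type*} [MeasurableSpace X] [MeasurableSpace Y]
    (fs : ℕ → X → Measure Y) (f : X → Measure Y)
    (μ : Measure X) (ν : Measure Y) : Prop :=
  ∀ φ : Y → ℝ, Measurable φ → Integrable φ ν →
    Tendsto (fun n => ∫ x, |(∫ y, φ y ∂(fs n x)) - (∫ y, φ y ∂(f x))| ∂μ)
      atTop (𝓝 0)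

open ProbabilityTheory

section

variable {α β γ : Type*} {mα : MeasurableSpace α} {mβ : MeasurableSpace β}
  {mγ : MeasurableSpace γ} {μ : Measure α} {ν : Measure β} {ρ : Measure γ}

namespace MeasureTheory.Measure

variable {E : Type*} [NormedAddCommGroup E] [NormedSpace ℝ E] {κ : Kernel α β}

lemma integrable_integral_of_integrable_comp {f : β → E} (hf : Integrable f (κ ∘ₘ μ)) :
    Integrable (fun x ↦ ∫ y, f y ∂κ x) μ := by
  rw [comp_eq_comp_const_apply] at hf
  simpa using hf.integral_comp

lemma integral_comp {f : β → E} (hf : Integrable f (κ ∘ₘ μ)) :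
    ∫ y, f y ∂(κ ∘ₘ μ) = ∫ x, ∫ y, f y ∂κ x ∂μ := by
  rw [comp_eq_comp_const_apply] at hf ⊢
  simpa using Kernel.integral_comp hf

lemma ae_integral_kernel_comp_eq {η : Kernel β γ} {f : γ → E}
    (hf : Integrable f ((η ∘ₖ κ) ∘ₘ μ)) :
    ∀ᵐ x ∂μ, ∫ z, f z ∂(η ∘ₖ κ) x = ∫ y, ∫ z, f z ∂η y ∂κ x := by
  filter_upwards [ae_integrable_of_integrable_comp hf] with x hx
  exact Kernel.integral_comp hx

end MeasureTheory.Measure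

open Measure

lemma abs_integral_sub_integral_le {μ' : Measure α} {f g : α → ℝ}
    (hf : Integrable f μ') (hg : Integrable g μ') :
    |∫ x, f x ∂μ' - ∫ x, g x ∂μ| ≤ ∫ x, |f x - g x| ∂μ' + |∫ x, g x ∂μ' - ∫ x, g x ∂μ| :=
  calc |∫ x, f x ∂μ' - ∫ x, g x ∂μ|
      ≤ |∫ x, f x ∂μ' - ∫ x, g x ∂μ'| + |∫ x, g x ∂μ' - ∫ x, g x ∂μ| := abs_sub_le _ _ _
    _ ≤ ∫ x, |f x - g x| ∂μ' + |∫ x, g x ∂μ' - ∫ x, g x ∂μ| := by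
      rw [← integral_sub hf hg]
      gcongr
      exact abs_integral_le_integral_abs

lemma integral_abs_integral_comp_sub_le {κ κ' : Kernel α β} {η η' : Kernel β γ}
    (hκ : κ ∘ₘ μ = ν) (hκ' : κ' ∘ₘ μ = ν) (hη : η ∘ₘ ν = ρ) (hη' : η' ∘ₘ ν = ρ)
    {φ : γ → ℝ} (hφ : Integrable φ ρ) :
    ∫ x, |∫ z, φ z ∂(η' ∘ₖ κ') x - ∫ z, φ z ∂(η ∘ₖ κ) x| ∂μ ≤
      ∫ y, |∫ z, φ z ∂η' y - ∫ z, φ z ∂η y| ∂ν +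
        ∫ x, |∫ y, ∫ z, φ z ∂η y ∂κ' x - ∫ y, ∫ z, φ z ∂η y ∂κ x| ∂μ := by
  set ψ := fun y ↦ ∫ z, φ z ∂η y
  set ψ' := fun y ↦ ∫ z, φ z ∂η' y
  have hψ : Integrable ψ (κ' ∘ₘ μ) := hκ' ▸ integrable_integral_of_integrable_comp (hη ▸ hφ)
  have hψ' : Integrable ψ' (κ' ∘ₘ μ) :=
    hκ' ▸ integrable_integral_of_integrable_comp (hη' ▸ hφ)
  have hψκ : Integrable ψ (κ ∘ₘ μ) := hκ.trans hκ'.symm ▸ hψ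
  have hdiff : Integrable (fun x ↦ ∫ y, |ψ' y - ψ y| ∂κ' x) μ :=
    integrable_integral_of_integrable_comp (hψ'.sub hψ).abs
  have hgap : Integrable (fun x ↦ |∫ y, ψ y ∂κ' x - ∫ y, ψ y ∂κ x|) μ :=
    ((integrable_integral_of_integrable_comp hψ).sub
      (integrable_integral_of_integrable_comp hψκ)).abs
  have hcomp := ae_integral_kernel_comp_eq (κ := κ) (η := η) (μ := μ) (f := φ)
    (by rwa [← comp_assoc, hκ, hη])
  have hcomp' := ae_integral_kernel_comp_eq (κ := κ') (η := η') (μ := μ) (f := φ)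
    (by rwa [← comp_assoc, hκ', hη'])
  calc ∫ x, |∫ z, φ z ∂(η' ∘ₖ κ') x - ∫ z, φ z ∂(η ∘ₖ κ) x| ∂μ
      ≤ ∫ x, (∫ y, |ψ' y - ψ y| ∂κ' x + |∫ y, ψ y ∂κ' x - ∫ y, ψ y ∂κ x|) ∂μ := by
        refine integral_mono_of_nonneg (ae_of_all _ fun _ ↦ abs_nonneg _) (hdiff.add hgap) ?_
        filter_upwards [hcomp, hcomp', ae_integrable_of_integrable_comp hψ,
          ae_integrable_of_integrable_comp hψ'] with x hx hx' hψx hψx'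
        rw [hx, hx']
        exact abs_integral_sub_integral_le hψx' hψx
    _ = ∫ y, |ψ' y - ψ y| ∂ν + ∫ x, |∫ y, ψ y ∂κ' x - ∫ y, ψ y ∂κ x| ∂μ := by
        rw [integral_add hdiff hgap, ← hκ', integral_comp (f := fun y ↦ |ψ' y - ψ y|)
          (hψ'.sub hψ).abs]

theorem TendstoSOT.comp {κs : ℕ → Kernel α β} {κ : Kernel α β} {ηs : ℕ → Kernel β γ}
    {η : Kernel β γ} (hκs : ∀ n, κs n ∘ₘ μ = ν) (hκ : κ ∘ₘ μ = ν)
    (hηs : ∀ n, ηs n ∘ₘ ν = ρ) (hη : η ∘ₘ ν = ρ)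
    (hκSOT : TendstoSOT (fun n ↦ ⇑(κs n)) κ μ ν) (hηSOT : TendstoSOT (fun n ↦ ⇑(ηs n)) η ν ρ) :
    TendstoSOT (fun n ↦ ⇑(ηs n ∘ₖ κs n)) (η ∘ₖ κ) μ ρ := by
  intro φ hφm hφ
  have hψm : Measurable fun y ↦ ∫ z, φ z ∂η y :=
    hφm.stronglyMeasurable.integral_kernel.measurable
  have hψ : Integrable (fun y ↦ ∫ z, φ z ∂η y) ν :=
    integrable_integral_of_integrable_comp (hη ▸ hφ)
  refine squeeze_zero (fun n ↦ integral_nonneg fun _ ↦ abs_nonneg _)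
    (fun n ↦ integral_abs_integral_comp_sub_le hκ (hκs n) hη (hηs n) hφ) ?_
  simpa using (hηSOT φ hφm hφ).add (hκSOT _ hψm hψ)

end

theorem comp_kernel_tendstoSOT_general
    {X Y Z : Type*}
    [MeasurableSpace X]
    [MeasurableSpace Y]
    [MeasurableSpace Z]
    (μ : Measure X)
    (gs : ℕ → X → Measure Y) (g : X → Measure Y)
    (hgs : ∀ n, Measurable (gs n)) (hg : Measurable g)
    (hs : ℕ → Y → Measure Z) (h : Y → Measure Z)
    (hhs : ∀ n, Measurable (hs n)) (hh : Measurable h)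
    (hgsbind : ∀ n, μ.bind (gs n) = μ.bind g)
    (hhsbind : ∀ n, (μ.bind g).bind (hs n) = (μ.bind g).bind h)
    (hgSOT : TendstoSOT gs g μ (μ.bind g))
    (hhSOT : TendstoSOT hs h (μ.bind g) ((μ.bind g).bind h)) :
    TendstoSOT
      (fun n x => (gs n x).bind (hs n))
      (fun x => (g x).bind h)
      μ ((μ.bind g).bind h) :=
  TendstoSOT.comp (κs := fun n ↦ ⟨gs n, hgs n⟩) (κ := ⟨g, hg⟩)
    (ηs := fun n ↦ ⟨hs n, hhs n⟩) (η := ⟨h, hh⟩) hgsbind rfl hhsbind rfl hgSOT hhSOT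

/-- Composition of Markov kernels is jointly continuous for the strong
operator topology. -/
theorem comp_kernel_tendstoSOT
    {X Y Z : Type*}
    [MeasurableSpace X] [StandardBorelSpace X] [Nonempty X]
    [MeasurableSpace Y] [StandardBorelSpace Y] [Nonempty Y]
    [MeasurableSpace Z] [StandardBorelSpace Z] [Nonempty Z]
    (μ : Measure X) [IsProbabilityMeasure μ]
    (gs : ℕ → X → Measure Y) (g : X → Measure Y)
    (hgs : ∀ n, Measurable (gs n)) (hg : Measurable g)
    (hgsP : ∀ n x, IsProbabilityMeasure (gs n x))
    (hgP : ∀ x, IsProbabilityMeasure (g x))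
    (hs : ℕ → Y → Measure Z) (h : Y → Measure Z)
    (hhs : ∀ n, Measurable (hs n)) (hh : Measurable h)
    (hhsP : ∀ n y, IsProbabilityMeasure (hs n y))
    (hhP : ∀ y, IsProbabilityMeasure (h y))
    (hgsbind : ∀ n, μ.bind (gs n) = μ.bind g)
    (hhsbind : ∀ n, (μ.bind g).bind (hs n) = (μ.bind g).bind h)
    (hgSOT : TendstoSOT gs g μ (μ.bind g))
    (hhSOT : TendstoSOT hs h (μ.bind g) ((μ.bind g).bind h)) :
    TendstoSOT
      (fun n x => (gs n x).bind (hs n))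
      (fun x => (g x).bind h)
      μ ((μ.bind g).bind h) :=
  comp_kernel_tendstoSOT_general μ gs g hgs hg hs h hhs hh hgsbind hhsbind hgSOT hhSOT
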